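/- Let n be a positive multiple of 3 with n ≥ 3, and let φ be a graph automorphism of VQ_{n-3}. Define φ₂ and φ₃ on the vertex set of VQ_{n-1} by φ₂(x_{n-1}x_{n-2}X_{n-3}) = x̄_{n-1}x_{n-2}φ(X_{n-3}) and φ₃(x_{n-1}x_{n-2}X_{n-3}) = x̄_{n-1}x̄_{n-2}φ(X_{n-3}), where X_{n-3} = x_{n-3}...x_1. Then the map σ₀ on the vertex set of VQ_n defined by σ₀(0 X_{n-1}) = 0 φ₂(X_{n-1}) and σ₀(1 X_{n-1}) = 1 φ₃(X_{n-1}) is a graph automorphism of VQ_n. -/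

import Mathlib

/-- Adjacency relation of the `n`-dimensional varietal hypercube `VQ_n`.
A vertex is a binary string `x_n x_{n-1} ... x_1`, encoded as a function
`X : Fin n → Bool` where `X ⟨k-1, _⟩` is the bit `x_k` (so index `n-1` is the
leading bit `x_n`). -/
def vqAdj : (n : ℕ) → (Fin n → Bool) → (Fin n → Bool) → Prop
  | 0, _, _ => False
  | 1, X, Y => X ≠ Y
  | (n + 2), X, Y =>
    if X (Fin.last (n + 1)) = Y (Fin.last (n + 1)) then
      -- both in the same copy of `VQ_{n+1}`
      vqAdj (n + 1) (Fin.init X) (Fin.init Y)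
    else if (n + 2) % 3 = 0 then
      -- transversal edge, `n + 2` divisible by 3:
      -- `x_{n-3} ... x_1 = y_{n-3} ... y_1` and
      -- `(x_{n-1}x_{n-2}, y_{n-1}y_{n-2}) ∈ {(00,00),(01,01),(10,11),(11,10)}`
      (∀ i : Fin (n + 2), (i : ℕ) < n - 1 → X i = Y i) ∧
      Y ⟨n, by omega⟩ = X ⟨n, by omega⟩ ∧
      Y ⟨n - 1, by omega⟩ = xor (X ⟨n, by omega⟩) (X ⟨n - 1, by omega⟩)
    else
      -- transversal edge, `n + 2` not divisible by 3:
      -- `x_{n-1} ... x_1 = y_{n-1} ... y_1`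
      Fin.init X = Fin.init Y

/-- The `n`-dimensional varietal hypercube. -/
def VQ (n : ℕ) : SimpleGraph (Fin n → Bool) := SimpleGraph.fromRel (vqAdj n)

/-- Apply `f` to the lowest `k` bits of a string of `m` bits, keeping the top
`m - k` bits unchanged. -/
def applyLow {m k : ℕ} (h : k ≤ m) (f : (Fin k → Bool) → (Fin k → Bool))
    (X : Fin m → Bool) : Fin m → Bool :=
  fun i => if h' : (i : ℕ) < k then f (fun j => X (Fin.castLE h j)) ⟨i, h'⟩ else X i

/-- Complement the bit at (0-based) index `t`, keeping all other bits unchanged. -/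
def flipAt {m : ℕ} (t : ℕ) (X : Fin m → Bool) : Fin m → Bool :=
  fun i => if (i : ℕ) = t then !(X i) else X i

/-! When `3 ∣ k`, every edge of `VQ (k + j)` either is an edge of `VQ k` on the lowest `k` bits
and fixes the top `j` bits, or fixes the lowest `k` bits and is an edge of `VQ j` on the top
ones: the levels of `VQ (k + j)` that carry the twisted matching are those of `VQ j` shifted by
a multiple of 3. Hence `VQ (k + 3) ≃g VQ k □ VQ 3`, and under this isomorphism `σ₀` is `φ × τ`
with `τ (x₃ x₂ x₁) = x₃ x̄₂ (x₁ ⊕ x₃)`, an automorphism of `VQ 3` checked on its eight vertices. -/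

/-- `vqTwist m (Fin.init X)` is `Fin.init` of the neighbour of `X` in the other copy of `VQ m`
inside `VQ (m + 1)`. -/
def vqTwist (m : ℕ) (U : Fin m → Bool) : Fin m → Bool :=
  fun i => if h : 3 ∣ m + 1 ∧ (i : ℕ) + 2 = m then xor (U ⟨i + 1, by omega⟩) (U i) else U i

theorem vqTwist_involutive (m : ℕ) : Function.Involutive (vqTwist m) := by
  intro U
  funext i
  by_cases h : 3 ∣ m + 1 ∧ (i : ℕ) + 2 = m
  · have h' : (i : ℕ) + 1 + 2 ≠ m := by omega
    simp [vqTwist, h, h']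
  · simp [vqTwist, h]

theorem vqAdj_succ (m : ℕ) (X Y : Fin (m + 1) → Bool) :
    vqAdj (m + 1) X Y ↔ if X (Fin.last m) = Y (Fin.last m) then
      vqAdj m (Fin.init X) (Fin.init Y) else Fin.init Y = vqTwist m (Fin.init X) := by
  cases m with
  | zero =>
    have : Fin.init Y = vqTwist 0 (Fin.init X) := Subsingleton.elim _ _
    simp [vqAdj, this, funext_iff, Fin.forall_fin_one]
  | succ n =>
    rw [vqAdj]
    split_ifs with htop hdiv
    · rfl
    · simp only [funext_iff, vqTwist, Fin.init]
      constructor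
      · rintro ⟨hlow, hY1, hY0⟩ i
        split_ifs with hi
        · convert hY0 using 3 <;> simp [Fin.ext_iff] <;> omega
        · rcases Nat.lt_or_ge (i : ℕ) (n - 1) with hlt | hge
          · exact (hlow _ hlt).symm
          · convert hY1 using 3 <;> simp <;> omega
      · intro h
        refine ⟨fun i hi => ?_, ?_, ?_⟩
        · have := h ⟨i, by omega⟩
          rw [dif_neg (by simp; omega)] at this
          exact this.symm
        · have := h ⟨n, by omega⟩
          rw [dif_neg (by simp)] at this
          exact this
        · have := h ⟨n - 1, by omega⟩
          rw [dif_pos (by simp; omega)] at this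
          convert this using 3 <;> simp [Fin.ext_iff]; omega
    · have : vqTwist (n + 1) (Fin.init X) = Fin.init X := by
        funext i; simp only [vqTwist]; rw [dif_neg (by omega)]
      rw [this, eq_comm]

theorem vqAdj_irrefl (m : ℕ) (X : Fin m → Bool) : ¬ vqAdj m X X := by
  induction m with
  | zero => exact id
  | succ m ih => simpa [vqAdj_succ] using ih (Fin.init X)

theorem vqAdj_symm (m : ℕ) (X Y : Fin m → Bool) : vqAdj m X Y → vqAdj m Y X := by
  induction m with
  | zero => exact id
  | succ m ih =>
    rw [vqAdj_succ, vqAdj_succ]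
    by_cases htop : X (Fin.last m) = Y (Fin.last m)
    · rw [if_pos htop, if_pos htop.symm]
      exact ih _ _
    · rw [if_neg htop, if_neg (Ne.symm htop)]
      intro h
      rw [h, vqTwist_involutive]

theorem VQ_adj (m : ℕ) (X Y : Fin m → Bool) : (VQ m).Adj X Y ↔ vqAdj m X Y := by
  rw [VQ, SimpleGraph.fromRel_adj, or_iff_left_of_imp (vqAdj_symm m Y X)]
  exact and_iff_right_of_imp fun h hXY => vqAdj_irrefl m Y (hXY ▸ h)

theorem Fin.init_append {α : Type*} {k j : ℕ} (A : Fin k → α) (P : Fin (j + 1) → α) :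
    Fin.init (Fin.append A P :) = Fin.append A (Fin.init P) := by
  conv_lhs => rw [← Fin.snoc_init_self P, Fin.append_snoc]
  exact Fin.init_snoc _ _

theorem Fin.append_last {α : Type*} {k j : ℕ} (A : Fin k → α) (P : Fin (j + 1) → α) :
    Fin.append A P (Fin.last (k + j)) = P (Fin.last j) :=
  Fin.append_right A P (Fin.last j)

theorem Fin.append_inj {α : Type*} {k j : ℕ} {A B : Fin k → α} {U V : Fin j → α} :
    Fin.append A U = Fin.append B V ↔ A = B ∧ U = V :=
  ((Fin.appendEquiv k j).apply_eq_iff_eq (x := (A, U)) (y := (B, V))).trans Prod.ext_iff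

theorem Fin.eq_iff_init_eq_and_last_eq {α : Type*} {j : ℕ} {P Q : Fin (j + 1) → α} :
    P = Q ↔ Fin.init P = Fin.init Q ∧ P (Fin.last j) = Q (Fin.last j) := by
  conv_lhs => rw [← Fin.snoc_init_self P, ← Fin.snoc_init_self Q]
  exact Fin.snoc_inj

theorem vqTwist_append {k : ℕ} (hk : 3 ∣ k) (j : ℕ) (A : Fin k → Bool) (U : Fin j → Bool) :
    vqTwist (k + j) (Fin.append A U) = Fin.append A (vqTwist j U) := by
  funext i
  refine Fin.addCases (fun i => ?_) (fun i => ?_) i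
  · rw [Fin.append_left, vqTwist, dif_neg (by simp; omega), Fin.append_left]
  · rw [Fin.append_right, vqTwist, vqTwist]
    by_cases h : 3 ∣ j + 1 ∧ (i : ℕ) + 2 = j
    · rw [dif_pos h, dif_pos (by simp; omega), Fin.append_right]
      congr 2
      exact Fin.append_right A U ⟨i + 1, by omega⟩
    · rw [dif_neg h, dif_neg (by simp; omega), Fin.append_right]

theorem vqAdj_append {k : ℕ} (hk : 3 ∣ k) (j : ℕ) (A B : Fin k → Bool) (P Q : Fin j → Bool) :
    vqAdj (k + j) (Fin.append A P) (Fin.append B Q) ↔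
      vqAdj k A B ∧ P = Q ∨ vqAdj j P Q ∧ A = B := by
  induction j with
  | zero =>
    rw [Subsingleton.elim P Q]
    simp [vqAdj, Fin.append_right_nil]
  | succ j ih =>
    refine (vqAdj_succ (k + j) (Fin.append A P :) (Fin.append B Q :)).trans ?_
    rw [vqAdj_succ j, Fin.init_append, Fin.init_append, vqTwist_append hk]
    rw [Fin.append_last, Fin.append_last, Fin.eq_iff_init_eq_and_last_eq]
    by_cases htop : P (Fin.last j) = Q (Fin.last j)
    · rw [if_pos htop, if_pos htop, ih]
      simp only [htop, and_true]
    · rw [if_neg htop, if_neg htop, Fin.append_inj]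
      simp only [htop, false_and, false_or, eq_comm (a := B), and_comm]

def vq3Flip (P : Fin 3 → Bool) : Fin 3 → Bool := ![xor (P 0) (P 2), !P 1, P 2]

theorem vq3Flip_involutive : Function.Involutive vq3Flip := by
  intro P
  funext i
  fin_cases i <;> simp [vq3Flip]

theorem vqAdj_vq3Flip (P Q : Fin 3 → Bool) : vqAdj 3 (vq3Flip P) (vq3Flip Q) ↔ vqAdj 3 P Q := by
  simp only [vqAdj]
  revert P Q
  decide

def SimpleGraph.Iso.boxProd {α β γ δ : Type*} {G : SimpleGraph α} {G' : SimpleGraph β}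
    {H : SimpleGraph γ} {H' : SimpleGraph δ} (f : G ≃g G') (g : H ≃g H') :
    G.boxProd H ≃g G'.boxProd H' where
  toEquiv := f.toEquiv.prodCongr g.toEquiv
  map_rel_iff' := by simp [boxProd_adj, f.map_adj_iff, g.map_adj_iff]

def VQ.appendIso {k : ℕ} (hk : 3 ∣ k) (j : ℕ) : (VQ k).boxProd (VQ j) ≃g VQ (k + j) where
  toEquiv := Fin.appendEquiv k j
  map_rel_iff' {x y} := by
    obtain ⟨A, P⟩ := x
    obtain ⟨B, Q⟩ := y
    change (VQ (k + j)).Adj (Fin.append A P) (Fin.append B Q) ↔ _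
    rw [VQ_adj, SimpleGraph.boxProd_adj, VQ_adj, VQ_adj, vqAdj_append hk]

def VQ.flipIso : VQ 3 ≃g VQ 3 where
  toEquiv := vq3Flip_involutive.toPerm
  map_rel_iff' := by simp [VQ_adj, vqAdj_vq3Flip]

def VQ.extendFlip {k : ℕ} (hk : 3 ∣ k) (φ : VQ k ≃g VQ k) : VQ (k + 3) ≃g VQ (k + 3) :=
  (VQ.appendIso hk 3).symm.trans ((φ.boxProd VQ.flipIso).trans (VQ.appendIso hk 3))

theorem VQ.extendFlip_apply {k : ℕ} (hk : 3 ∣ k) (φ : VQ k ≃g VQ k) (X : Fin (k + 3) → Bool) :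
    VQ.extendFlip hk φ X =
      Fin.append (φ fun i => X (Fin.castAdd 3 i)) (vq3Flip fun j => X (Fin.natAdd k j)) :=
  rfl

/-- **Lemma 2.4, case `n = 3k`, `φ = φ₂` when `x_n = 0` and `φ = φ₃` when `x_n = 1`.**
Let `n ≥ 3` be a multiple of `3` and `φ` an automorphism of `VQ_{n-3}`. With
`φ₂ : x_{n-1} x_{n-2} X_{n-3} ↦ x̄_{n-1} x_{n-2} φ(X_{n-3})` and
`φ₃ : x_{n-1} x_{n-2} X_{n-3} ↦ x̄_{n-1} x̄_{n-2} φ(X_{n-3})` on the vertices of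
`VQ_{n-1}`, the map `σ₀` defined by `σ₀(0 X_{n-1}) = 0 φ₂(X_{n-1})` and
`σ₀(1 X_{n-1}) = 1 φ₃(X_{n-1})` is a graph automorphism of `VQ_n`. -/
theorem VQ_sigma0_phi32_isAutomorphism (n : ℕ) (h3 : n % 3 = 0) (hn : 3 ≤ n)
    (φ : VQ (n - 3) ≃g VQ (n - 3)) :
    ∃ σ : VQ n ≃g VQ n, ∀ X : Fin n → Bool,
      σ X = applyLow (by omega : n - 1 ≤ n)
        (if X ⟨n - 1, by omega⟩ = false then
          fun Z => flipAt (n - 2) (applyLow (by omega : n - 3 ≤ n - 1) (⇑φ) Z)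
         else
          fun Z => flipAt (n - 2) (flipAt (n - 3) (applyLow (by omega : n - 3 ≤ n - 1) (⇑φ) Z))) X := by
  obtain ⟨k, rfl⟩ : ∃ k, n = k + 3 := ⟨n - 3, by omega⟩
  refine ⟨VQ.extendFlip (by omega) φ, fun X => ?_⟩
  rw [VQ.extendFlip_apply]
  funext i
  refine Fin.addCases (fun i => ?_) (fun j => ?_) i
  · have hi : (i : ℕ) < k := i.isLt
    have hi1 : (i : ℕ) ≠ k + 1 := by omega
    cases h : X ⟨k + 2, by omega⟩ <;>
      simp [applyLow, flipAt, h, hi, hi.ne, hi1, (by omega : (i : ℕ) < k + 2)] <;> rfl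
  · have hX : ∀ j : Fin 3, X (Fin.natAdd k j) = X ⟨k + j, by omega⟩ := fun _ => rfl
    fin_cases j <;> cases h : X ⟨k + 2, by omega⟩ <;> simp [vq3Flip, applyLow, flipAt, h, hX]
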